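/- arXiv:1910.04291 — 2 statements merged into one kernel-verified Lean document; each statement's English description precedes it below -/
import Mathlib

section
/- Let S = ⋃_{i∈J} [a_i, a_{i+1}] be a union of some of the intervals of a partition −∞ = a_{−r−1} < a_{−r} < ⋯ < a_{r'+1} < a_{r'+2} = ∞ of ℝ, with c ≥ 0 satisfying a_{−r} ≤ −c and a_{r'+1} ≥ c. Define S̃ = (−∞, a_{−r}] ∪ (⋃_{i ∈ J ∩ {−r,…,r'}} [a_i, a_{i+1}]) ∪ [a_{r'+1}, ∞). Then for φ ∼ N(0, τ²), Pr(|φ| ≥ c | φ ∈ S̃) ≥ Pr(|φ| ≥ c | φ ∈ S), provided Pr(φ ∈ S) > 0. -/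
/-!
Since `S ⊆ S̃` and every point of `S̃ \ S` lies in one of the tails `(-∞, a₋ᵣ]`, `[a_{r'+1}, ∞)`,
which are contained in `{|φ| ≥ c}`, passing from `S` to `S̃` adds the same mass `e` to the
numerator and to the denominator of the conditional probability, and `A / B ≤ (A + e) / (B + e)`
whenever `A ≤ B`.
-/

open MeasureTheory ProbabilityTheory
open scoped NNReal ENNReal

theorem ENNReal.div_le_add_div_add {a b e : ℝ≥0∞} (hab : a ≤ b) (he : e ≠ ∞) :
    a / b ≤ (a + e) / (b + e) := by
  rcases eq_or_ne b 0 with rfl | hb0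
  · simp [nonpos_iff_eq_zero.mp hab]
  rcases eq_or_ne b ∞ with rfl | hbt
  · simp [ENNReal.div_top]
  have hbe0 : b + e ≠ 0 := by simp [hb0]
  have hbet : b + e ≠ ∞ := ENNReal.add_ne_top.mpr ⟨hbt, he⟩
  rw [ENNReal.div_le_iff_le_mul (.inl hb0) (.inl hbt), div_eq_mul_inv, mul_right_comm,
    ← div_eq_mul_inv, ENNReal.le_div_iff_mul_le (.inl hbe0) (.inl hbet), mul_add, add_mul,
    mul_comm e b]
  gcongr

theorem ProbabilityTheory.cond_le_cond_of_subset_of_diff_subset {Ω : Type*} [MeasurableSpace Ω]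
    {μ : Measure Ω} [IsFiniteMeasure μ] {s s' t : Set Ω} (hs : MeasurableSet s)
    (hs' : MeasurableSet s') (hss' : s ⊆ s') (hdiff : s' \ s ⊆ t) : μ[t | s] ≤ μ[t | s'] := by
  have hdm : MeasurableSet (s' \ s) := hs'.diff hs
  have hs'_eq : μ s' = μ s + μ (s' \ s) := by
    rw [← measure_union Set.disjoint_sdiff_right hdm, Set.union_sdiff_cancel hss']
  have hs't_eq : μ (s' ∩ t) = μ (s ∩ t) + μ (s' \ s) := by
    have hsplit : s' ∩ t = (s ∩ t) ∪ (s' \ s) := by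
      ext x
      by_cases hx : x ∈ s
      · simp [hx, hss' hx]
      · exact ⟨fun h => .inr ⟨h.1, hx⟩, fun h => h.elim (fun h => ⟨hss' h.1, h.2⟩)
          fun h => ⟨h.1, hdiff h⟩⟩
    rw [hsplit, measure_union (Set.disjoint_sdiff_right.mono_left Set.inter_subset_left) hdm]
  rw [cond_apply hs, cond_apply hs', hs'_eq, hs't_eq, ← ENNReal.div_eq_inv_mul,
    ← ENNReal.div_eq_inv_mul]
  exact ENNReal.div_le_add_div_add (measure_mono Set.inter_subset_left) (measure_ne_top μ _)

section PartitionUnions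

variable (a : ℤ → ℝ) (r r' : ℕ) (J : Set ℤ)

/-- The union `S` of the cells of the partition `-∞ = a₋ᵣ₋₁ < a₋ᵣ < ⋯ < a_{r'+1} < a_{r'+2} = ∞`
indexed by `J`; the indices `-r - 1` and `r' + 1` stand for the two unbounded cells. -/
def intervalUnion : Set ℝ :=
  ⋃ i ∈ J, if i < -(r : ℤ) then Set.Iic (a (-(r : ℤ)))
    else if (r' : ℤ) < i then Set.Ici (a ((r' : ℤ) + 1))
    else Set.Icc (a i) (a (i + 1))

/-- The set `S̃`. -/
def tailCompletion : Set ℝ :=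
  Set.Iic (a (-(r : ℤ))) ∪ (⋃ i ∈ J ∩ Set.Icc (-(r : ℤ)) (r' : ℤ), Set.Icc (a i) (a (i + 1))) ∪
    Set.Ici (a ((r' : ℤ) + 1))

theorem measurableSet_intervalUnion : MeasurableSet (intervalUnion a r r' J) :=
  MeasurableSet.biUnion J.to_countable fun i _ => by
    split_ifs
    exacts [measurableSet_Iic, measurableSet_Ici, measurableSet_Icc]

theorem measurableSet_tailCompletion : MeasurableSet (tailCompletion a r r' J) :=
  (measurableSet_Iic.union
    (MeasurableSet.biUnion (Set.to_countable _) fun _ _ => measurableSet_Icc)).union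
    measurableSet_Ici

theorem intervalUnion_subset_tailCompletion :
    intervalUnion a r r' J ⊆ tailCompletion a r r' J := by
  intro x hx
  simp only [intervalUnion, Set.mem_iUnion, exists_prop] at hx
  obtain ⟨i, hiJ, hx⟩ := hx
  split_ifs at hx with hlo hhi
  · exact .inl (.inl hx)
  · exact .inr hx
  · exact .inl (.inr (Set.mem_biUnion ⟨hiJ, not_lt.mp hlo, not_lt.mp hhi⟩ hx))

theorem tailCompletion_diff_intervalUnion_subset :
    tailCompletion a r r' J \ intervalUnion a r r' J ⊆
      Set.Iic (a (-(r : ℤ))) ∪ Set.Ici (a ((r' : ℤ) + 1)) := by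
  rintro x ⟨(hx | hx) | hx, hxS⟩
  · exact .inl hx
  · refine absurd ?_ hxS
    obtain ⟨i, ⟨hiJ, hlo, hhi⟩, hx⟩ := Set.mem_iUnion₂.mp hx
    refine Set.mem_biUnion hiJ ?_
    rwa [if_neg (not_lt.mpr hlo), if_neg (not_lt.mpr hhi)]
  · exact .inr hx

end PartitionUnions

theorem early_stopping_conservative_general (τ : ℝ≥0) (r r' : ℕ) (a : ℤ → ℝ)
    (c : ℝ) (hlo : a (-(r : ℤ)) ≤ -c) (hhi : c ≤ a ((r' : ℤ) + 1))
    (J : Set ℤ)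
    (S Stilde : Set ℝ)
    (hS : S = ⋃ i ∈ J,
      (if i < -(r : ℤ) then Set.Iic (a (-(r : ℤ)))
       else if (r' : ℤ) < i then Set.Ici (a ((r' : ℤ) + 1))
       else Set.Icc (a i) (a (i + 1))))
    (hSt : Stilde = Set.Iic (a (-(r : ℤ))) ∪
        (⋃ i ∈ J ∩ Set.Icc (-(r : ℤ)) (r' : ℤ), Set.Icc (a i) (a (i + 1))) ∪
        Set.Ici (a ((r' : ℤ) + 1))) :
    (ProbabilityTheory.cond (gaussianReal 0 (τ ^ 2)) S) {x | c ≤ |x|}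
      ≤ (ProbabilityTheory.cond (gaussianReal 0 (τ ^ 2)) Stilde) {x | c ≤ |x|} := by
  change S = intervalUnion a r r' J at hS
  change Stilde = tailCompletion a r r' J at hSt
  subst hS hSt
  refine cond_le_cond_of_subset_of_diff_subset (measurableSet_intervalUnion a r r' J)
    (measurableSet_tailCompletion a r r' J) (intervalUnion_subset_tailCompletion a r r' J)
    ((tailCompletion_diff_intervalUnion_subset a r r' J).trans ?_)
  rintro x (hx | hx)
  · exact (le_neg.mpr (hx.trans hlo)).trans (neg_le_abs x)
  · exact (hhi.trans hx).trans (le_abs_self x)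

/-- Proposition 4: early stopping yields a conservative p-value.
`S` is a union of intervals of the partition `-∞ = a₋ᵣ₋₁ < a₋ᵣ < ⋯ < a_{r'+1} < a_{r'+2} = ∞`
indexed by `J`, with `a₋ᵣ ≤ -c` and `a_{r'+1} ≥ c`; `S̃` replaces the unexplored tails by
full half-lines. Then `Pr(|φ| ≥ c ∣ φ ∈ S̃) ≥ Pr(|φ| ≥ c ∣ φ ∈ S)` for `φ ~ N(0, τ²)`. -/
theorem early_stopping_conservative (τ : ℝ≥0) (hτ : τ ≠ 0) (r r' : ℕ) (a : ℤ → ℝ)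
    (ha : StrictMonoOn a (Set.Icc (-(r : ℤ)) ((r' : ℤ) + 1)))
    (c : ℝ) (hc : 0 ≤ c) (hlo : a (-(r : ℤ)) ≤ -c) (hhi : c ≤ a ((r' : ℤ) + 1))
    (J : Set ℤ) (hJ : J ⊆ Set.Icc (-(r : ℤ) - 1) ((r' : ℤ) + 1))
    (S Stilde : Set ℝ)
    (hS : S = ⋃ i ∈ J,
      (if i < -(r : ℤ) then Set.Iic (a (-(r : ℤ)))
       else if (r' : ℤ) < i then Set.Ici (a ((r' : ℤ) + 1))
       else Set.Icc (a i) (a (i + 1))))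
    (hSt : Stilde = Set.Iic (a (-(r : ℤ))) ∪
        (⋃ i ∈ J ∩ Set.Icc (-(r : ℤ)) (r' : ℤ), Set.Icc (a i) (a (i + 1))) ∪
        Set.Ici (a ((r' : ℤ) + 1)))
    (hpos : gaussianReal 0 (τ ^ 2) S ≠ 0) :
    (ProbabilityTheory.cond (gaussianReal 0 (τ ^ 2)) S) {x | c ≤ |x|}
      ≤ (ProbabilityTheory.cond (gaussianReal 0 (τ ^ 2)) Stilde) {x | c ≤ |x|} :=
  early_stopping_conservative_general τ r r' a c hlo hhi J S Stilde hS hSt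
end

section
/- Fix changepoints 0 = τ̂₀ < τ̂₁ < ⋯ < τ̂_K < τ̂_{K+1} = T, data y ∈ ℝ^T, λ ≥ 0, and the contrast ν from equation (5). Define C(φ) = min over u₀,…,u_K ∈ ℝ of ½ Σ_{k=0}^{K} Σ_{t=τ̂_k+1}^{τ̂_{k+1}} (y'_t(φ) − u_k)² + λK, where y'(φ) = y − ν(ν^⊤y)/‖ν‖² + νφ/‖ν‖². Then C is a constant function of φ. -/
/-- The cost of segmenting `z` with changepoints fixed at `tau 1 < ⋯ < tau K`
(1-indexed timepoints; segment `k` is `(tau k, tau (k+1)]`):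
`C = min over u₀,…,u_K of ½ Σₖ Σ_{t=τ̂ₖ+1}^{τ̂ₖ₊₁} (z_t − u_k)² + λK`. -/
noncomputable def restrictedCost (K : ℕ) (tau : ℕ → ℕ) (lam : ℝ) (z : ℕ → ℝ) : ℝ :=
  ⨅ u : ℕ → ℝ,
    ((1 / 2) * ∑ k ∈ Finset.range (K + 1),
        ∑ t ∈ Finset.Ioc (tau k) (tau (k + 1)), (z t - u k) ^ 2 + lam * K)

/-- The perturbed data `y'(φ) = y − ν(ν⊤y)/‖ν‖² + νφ/‖ν‖²` (1-indexed, length `T`). -/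
noncomputable def yPerturb (T : ℕ) (y ν : ℕ → ℝ) (φ : ℝ) : ℕ → ℝ := fun t =>
  y t - ((∑ r ∈ Finset.Icc 1 T, ν r * y r) / (∑ r ∈ Finset.Icc 1 T, (ν r) ^ 2)) * ν t
    + (φ / (∑ r ∈ Finset.Icc 1 T, (ν r) ^ 2)) * ν t

/-! Shifting `z` by `c k` on segment `k` is absorbed by the reparametrisation `u k ↦ u k + c k`
of the segment means, so the infimum does not change. A contrast `ν` built from indicator
functions of changepoint intervals is constant on every segment, and `y'(φ) - y'(φ')` is a
multiple of `ν`, so the perturbed data for two values of `φ` differ by such a shift. -/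

lemma restrictedCost_eq_of_forall_segment_eq_add (K : ℕ) (tau : ℕ → ℕ) (lam : ℝ)
    (z w c : ℕ → ℝ) (h : ∀ k ≤ K, ∀ t ∈ Finset.Ioc (tau k) (tau (k + 1)), z t = w t + c k) :
    restrictedCost K tau lam z = restrictedCost K tau lam w := by
  have hshift : Function.Surjective (fun u : ℕ → ℝ => u + c) :=
    fun v => ⟨v - c, sub_add_cancel v c⟩
  unfold restrictedCost
  rw [← hshift.iInf_comp]
  refine iInf_congr fun u => ?_
  congr 2
  refine Finset.sum_congr rfl fun k hk => Finset.sum_congr rfl fun t ht => ?_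
  rw [h k (Nat.lt_succ_iff.mp (Finset.mem_range.mp hk)) t ht, Pi.add_apply]
  ring

lemma le_iff_lt_of_mem_Ioc {K : ℕ} {tau : ℕ → ℕ} (htau : StrictMonoOn tau (Set.Iic (K + 1)))
    {k m t : ℕ} (hk : k ≤ K) (hm : m ≤ K + 1) (ht : t ∈ Finset.Ioc (tau k) (tau (k + 1))) :
    t ≤ tau m ↔ k < m := by
  rw [Finset.mem_Ioc] at ht
  constructor
  · intro htm
    by_contra! hmk
    have : tau m ≤ tau k := htau.monotoneOn hm (Set.mem_Iic.mpr (by omega)) hmk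
    omega
  · intro hkm
    exact ht.2.trans (htau.monotoneOn (Set.mem_Iic.mpr (by omega)) hm hkm)

lemma contrast_eq_on_segment {K j : ℕ} {tau : ℕ → ℕ} (hjK : j ≤ K)
    (hmono : ∀ k ≤ K, tau k < tau (k + 1)) {ν : ℕ → ℝ}
    (hν : ∀ t, ν t =
      if t ≤ tau (j - 1) then 0
      else if t ≤ tau j then 1 / ((tau j : ℝ) - tau (j - 1))
      else if t ≤ tau (j + 1) then -(1 / ((tau (j + 1) : ℝ) - tau j))
      else 0)
    {k t : ℕ} (hk : k ≤ K) (ht : t ∈ Finset.Ioc (tau k) (tau (k + 1))) :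
    ν t = ν (tau (k + 1)) := by
  have htau : StrictMonoOn tau (Set.Iic (K + 1)) :=
    strictMonoOn_Iic_of_lt_succ fun m hm => hmono m (Nat.lt_succ_iff.mp hm)
  have hright : tau (k + 1) ∈ Finset.Ioc (tau k) (tau (k + 1)) :=
    Finset.mem_Ioc.mpr ⟨hmono k hk, le_rfl⟩
  rw [hν t, hν (tau (k + 1))]
  simp only [le_iff_lt_of_mem_Ioc htau hk (by omega : j - 1 ≤ K + 1) ht,
    le_iff_lt_of_mem_Ioc htau hk (by omega : j ≤ K + 1) ht,
    le_iff_lt_of_mem_Ioc htau hk (by omega : j + 1 ≤ K + 1) ht,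
    le_iff_lt_of_mem_Ioc htau hk (by omega : j - 1 ≤ K + 1) hright,
    le_iff_lt_of_mem_Ioc htau hk (by omega : j ≤ K + 1) hright,
    le_iff_lt_of_mem_Ioc htau hk (by omega : j + 1 ≤ K + 1) hright]

lemma yPerturb_eq_add (T : ℕ) (y ν : ℕ → ℝ) (φ φ' : ℝ) (t : ℕ) :
    yPerturb T y ν φ t
      = yPerturb T y ν φ' t + (φ - φ') / (∑ r ∈ Finset.Icc 1 T, (ν r) ^ 2) * ν t := by
  simp only [yPerturb]
  ring

theorem restrictedCost_const_general (T K : ℕ) (tau : ℕ → ℕ) (j : ℕ)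
    (hjK : j ≤ K)
    (hmono : ∀ k ≤ K, tau k < tau (k + 1))
    (lam : ℝ) (y ν : ℕ → ℝ)
    (hν : ∀ t, ν t =
      if t ≤ tau (j - 1) then 0
      else if t ≤ tau j then 1 / ((tau j : ℝ) - tau (j - 1))
      else if t ≤ tau (j + 1) then -(1 / ((tau (j + 1) : ℝ) - tau j))
      else 0)
    (φ φ' : ℝ) :
    restrictedCost K tau lam (yPerturb T y ν φ)
      = restrictedCost K tau lam (yPerturb T y ν φ') := by
  refine restrictedCost_eq_of_forall_segment_eq_add K tau lam _ _
    (fun k => (φ - φ') / (∑ r ∈ Finset.Icc 1 T, (ν r) ^ 2) * ν (tau (k + 1))) ?_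
  intro k hk t ht
  rw [yPerturb_eq_add T y ν φ φ' t, contrast_eq_on_segment hjK hmono hν hk ht]

/-- Proposition 5: the restricted segmentation cost `C(φ)` of the
perturbed data `y'(φ)`, with changepoints fixed at `τ̂₁,…,τ̂_K` and `ν` the contrast
of equation (5), is a constant function of `φ`. -/
theorem restrictedCost_const (T K : ℕ) (tau : ℕ → ℕ) (j : ℕ)
    (hj1 : 1 ≤ j) (hjK : j ≤ K)
    (h0 : tau 0 = 0) (hT : tau (K + 1) = T) (hmono : ∀ k ≤ K, tau k < tau (k + 1))
    (lam : ℝ) (hlam : 0 ≤ lam) (y ν : ℕ → ℝ)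
    (hν : ∀ t, ν t =
      if t ≤ tau (j - 1) then 0
      else if t ≤ tau j then 1 / ((tau j : ℝ) - tau (j - 1))
      else if t ≤ tau (j + 1) then -(1 / ((tau (j + 1) : ℝ) - tau j))
      else 0)
    (φ φ' : ℝ) :
    restrictedCost K tau lam (yPerturb T y ν φ)
      = restrictedCost K tau lam (yPerturb T y ν φ') :=
  restrictedCost_const_general T K tau j hjK hmono lam y ν hν φ φ'
end
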